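/- Let G_S be a rooted graph, λ := −lim_{ℓ→∞} λ₁(G_S, ℓ), and assume λ₁(G) > −λ. Then for every ℓ ∈ ℕ, the smallest eigenvalue of the path extension (G_S, ℓ) is strictly greater than −λ. -/

import Mathlib

/-!
Zero-extending a vector from `(G_S, ℓ)` to `(G_S, ℓ + 1)` preserves its Rayleigh quotient, so
`λ₁(G_S, ℓ)` is nonincreasing in `ℓ` and bounded below by its limit `-λ`. If `λ₁(G_S, ℓ) = -λ`, then
also `λ₁(G_S, ℓ + 1) = -λ`, so the zero extension of a `-λ`-eigenvector of `(G_S, ℓ)` minimises the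
Rayleigh quotient of `(G_S, ℓ + 1)` and is therefore an eigenvector. Read from the far end of the
path, the eigen-equations force it to vanish along the whole path, so its restriction to `G` is a
`-λ`-eigenvector of `G`, contradicting `λ₁(G) > -λ`.
-/

open Matrix Filter
open scoped Classical

noncomputable def adjM {α : Type*} [Fintype α] (G : SimpleGraph α) : Matrix α α ℝ :=
  fun x y => if G.Adj x y then 1 else 0

noncomputable def minEig {α : Type*} [Fintype α] (G : SimpleGraph α) : ℝ :=
  sInf {μ : ℝ | ∃ x : α → ℝ, x ≠ 0 ∧ adjM G *ᵥ x = μ • x}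

/-- The path extension `(F_R, ℓ)`: add a path `v_0 … v_ℓ` (vertices `Fin (ℓ+1)`) to `F`,
joining `v_0` to every vertex of the root set `R`. -/
def pathExt {V : Type*} (F : SimpleGraph V) (R : Set V) (ℓ : ℕ) :
    SimpleGraph (V ⊕ Fin (ℓ + 1)) :=
  SimpleGraph.fromRel (fun x y =>
    match x, y with
    | Sum.inl u, Sum.inl v => F.Adj u v
    | Sum.inl u, Sum.inr i => u ∈ R ∧ (i : ℕ) = 0
    | Sum.inr i, Sum.inr j => (j : ℕ) = (i : ℕ) + 1
    | _, _ => False)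

namespace Matrix

variable {n : Type*} [Fintype n]

noncomputable def minEigenvalue (A : Matrix n n ℝ) : ℝ :=
  sInf {μ | ∃ x : n → ℝ, x ≠ 0 ∧ A *ᵥ x = μ • x}

namespace IsHermitian

variable {A : Matrix n n ℝ}

theorem exists_eigenvalue_mul_dotProduct_self_le [Nonempty n] (hA : A.IsHermitian) :
    ∃ c, (∃ x : n → ℝ, x ≠ 0 ∧ A *ᵥ x = c • x) ∧ ∀ x, c * (x ⬝ᵥ x) ≤ x ⬝ᵥ A *ᵥ x := by
  classical
  -- `c` is the infimum of the Rayleigh quotient of `A` acting on Euclidean space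
  set T := A.toEuclideanLin
  have hT : T.IsSymmetric := isSymmetric_toEuclideanLin_iff.mpr hA
  obtain ⟨x, hx⟩ := (hT.hasEigenvalue_iInf_of_finiteDimensional).exists_hasEigenvector
  refine ⟨_, ⟨WithLp.ofLp x, by simpa using hx.2, congrArg WithLp.ofLp hx.apply_eq_smul⟩, ?_⟩
  intro y
  rcases eq_or_ne y 0 with rfl | hy
  · simp
  have hy' : WithLp.toLp 2 y ≠ 0 := by simpa using hy
  have hbdd : BddBelow (Set.range fun z : {z : EuclideanSpace ℝ n // z ≠ 0} =>
      RCLike.re (inner ℝ (T z) (z : EuclideanSpace ℝ n)) / ‖(z : EuclideanSpace ℝ n)‖ ^ 2) := by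
    refine ⟨-‖LinearMap.toContinuousLinearMap T‖, ?_⟩
    rintro _ ⟨z, rfl⟩
    have h := (LinearMap.toContinuousLinearMap T).rayleighQuotient_le_norm z.1
    simp only [ContinuousLinearMap.rayleighQuotient, ContinuousLinearMap.reApplyInnerSelf,
      LinearMap.coe_toContinuousLinearMap'] at h
    exact neg_le_of_abs_le h
  have hle := ciInf_le hbdd ⟨WithLp.toLp 2 y, hy'⟩
  have hpos : (0 : ℝ) < ‖WithLp.toLp 2 y‖ ^ 2 := by positivity
  have hquad : RCLike.re (inner ℝ (T (WithLp.toLp 2 y)) (WithLp.toLp 2 y)) = y ⬝ᵥ A *ᵥ y := by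
    change RCLike.re (inner ℝ (WithLp.toLp 2 (A *ᵥ y)) (WithLp.toLp 2 y)) = _
    rw [EuclideanSpace.inner_toLp_toLp, star_trivial, RCLike.re_to_real]
  have hnorm : ‖WithLp.toLp 2 y‖ ^ 2 = y ⬝ᵥ y := by
    rw [EuclideanSpace.real_norm_sq_eq]
    simp [dotProduct, sq]
  rw [le_div_iff₀ hpos, hquad, hnorm] at hle
  simpa [mul_comm] using hle

theorem minEigenvalue_spec [Nonempty n] (hA : A.IsHermitian) :
    (∃ x : n → ℝ, x ≠ 0 ∧ A *ᵥ x = A.minEigenvalue • x) ∧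
      ∀ x, A.minEigenvalue * (x ⬝ᵥ x) ≤ x ⬝ᵥ A *ᵥ x := by
  obtain ⟨c, hc, hle⟩ := hA.exists_eigenvalue_mul_dotProduct_self_le
  have hleast : IsLeast {μ | ∃ x : n → ℝ, x ≠ 0 ∧ A *ᵥ x = μ • x} c := by
    refine ⟨hc, ?_⟩
    rintro μ ⟨x, hx, hμ⟩
    have hpos : 0 < x ⬝ᵥ x := by simpa using dotProduct_star_self_pos_iff.mpr hx
    have := hle x
    rw [hμ, dotProduct_smul, smul_eq_mul] at this
    exact le_of_mul_le_mul_right this hpos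
  rw [minEigenvalue, hleast.csInf_eq]
  exact ⟨hc, hle⟩

theorem minEigenvalue_le_of_mulVec_eq_smul (hA : A.IsHermitian) {μ : ℝ} {x : n → ℝ}
    (hx : x ≠ 0) (h : A *ᵥ x = μ • x) : A.minEigenvalue ≤ μ := by
  obtain ⟨i, -⟩ := Function.ne_iff.mp hx
  have : Nonempty n := ⟨i⟩
  have hpos : 0 < x ⬝ᵥ x := by simpa using dotProduct_star_self_pos_iff.mpr hx
  have hle := (hA.minEigenvalue_spec).2 x
  rw [h, dotProduct_smul, smul_eq_mul] at hle
  exact le_of_mul_le_mul_right hle hpos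

theorem mulVec_eq_minEigenvalue_smul_of_dotProduct_eq [Nonempty n] (hA : A.IsHermitian)
    {x : n → ℝ} (h : x ⬝ᵥ A *ᵥ x = A.minEigenvalue * (x ⬝ᵥ x)) :
    A *ᵥ x = A.minEigenvalue • x := by
  classical
  set B := A - A.minEigenvalue • (1 : Matrix n n ℝ)
  have hB : ∀ z, B *ᵥ z = A *ᵥ z - A.minEigenvalue • z := fun z => by
    simp [B, sub_mulVec, smul_mulVec]
  have hBpsd : B.PosSemidef := by
    refine .of_dotProduct_mulVec_nonneg (hA.sub (isHermitian_one.smul (.all _))) fun z => ?_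
    rw [star_trivial, hB, dotProduct_sub, dotProduct_smul, smul_eq_mul, sub_nonneg]
    exact (hA.minEigenvalue_spec).2 z
  have hzero : star x ⬝ᵥ B *ᵥ x = 0 := by
    rw [star_trivial, hB, dotProduct_sub, dotProduct_smul, smul_eq_mul, h, sub_self]
  exact sub_eq_zero.mp ((hB x).symm.trans ((hBpsd.dotProduct_mulVec_zero_iff x).mp hzero))

end IsHermitian

section Submatrix

variable {m : Type*} [Fintype m] {f : m → n}

theorem comp_dotProduct_comp (hf : f.Injective) {y : n → ℝ}
    (hy : ∀ b ∉ Set.range f, y b = 0) (u : n → ℝ) : (y ∘ f) ⬝ᵥ (u ∘ f) = y ⬝ᵥ u :=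
  Fintype.sum_of_injective f hf _ _ (fun b hb => by simp [hy b hb]) fun _ => rfl

theorem submatrix_mulVec_comp (A : Matrix n n ℝ) (hf : f.Injective) {y : n → ℝ}
    (hy : ∀ b ∉ Set.range f, y b = 0) : A.submatrix f f *ᵥ (y ∘ f) = (A *ᵥ y) ∘ f := by
  ext i
  simpa [mulVec, dotProduct, mul_comm] using comp_dotProduct_comp hf hy (A (f i))

theorem submatrix_mulVec_comp_eq_smul {A : Matrix n n ℝ} (hf : f.Injective) {μ : ℝ}
    {y : n → ℝ} (hy : ∀ b ∉ Set.range f, y b = 0) (h : A *ᵥ y = μ • y) :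
    A.submatrix f f *ᵥ (y ∘ f) = μ • (y ∘ f) := by
  rw [submatrix_mulVec_comp A hf hy, h]
  rfl

theorem extend_zero_dotProduct_self (hf : f.Injective) (x : m → ℝ) :
    Function.extend f x 0 ⬝ᵥ Function.extend f x 0 = x ⬝ᵥ x := by
  conv_rhs => rw [← Function.extend_comp hf x 0]
  exact (comp_dotProduct_comp hf (fun b hb => Function.extend_apply' _ _ b hb) _).symm

theorem extend_zero_dotProduct_mulVec_extend_zero (A : Matrix n n ℝ) (hf : f.Injective)
    (x : m → ℝ) :
    Function.extend f x 0 ⬝ᵥ A *ᵥ Function.extend f x 0 = x ⬝ᵥ A.submatrix f f *ᵥ x := by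
  have hy : ∀ b ∉ Set.range f, Function.extend f x 0 b = 0 := fun b hb =>
    Function.extend_apply' _ _ b hb
  conv_rhs => rw [← Function.extend_comp hf x 0]
  rw [submatrix_mulVec_comp A hf hy, comp_dotProduct_comp hf hy]

theorem IsHermitian.minEigenvalue_le_minEigenvalue_submatrix [Nonempty m] {A : Matrix n n ℝ}
    (hA : A.IsHermitian) (hf : f.Injective) :
    A.minEigenvalue ≤ (A.submatrix f f).minEigenvalue := by
  have : Nonempty n := .map f ‹_›
  obtain ⟨x, hx, hAx⟩ := (hA.submatrix f).minEigenvalue_spec.1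
  have hpos : 0 < x ⬝ᵥ x := by simpa using dotProduct_star_self_pos_iff.mpr hx
  have hquad := hA.minEigenvalue_spec.2 (Function.extend f x 0)
  rw [extend_zero_dotProduct_mulVec_extend_zero A hf, extend_zero_dotProduct_self hf, hAx,
    dotProduct_smul, smul_eq_mul] at hquad
  exact le_of_mul_le_mul_right hquad hpos

theorem IsHermitian.mulVec_extend_zero_eq_minEigenvalue_smul [Nonempty n] {A : Matrix n n ℝ} (hA : A.IsHermitian)
    (hf : f.Injective) {x : m → ℝ} (hx : A.submatrix f f *ᵥ x = A.minEigenvalue • x) :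
    A *ᵥ Function.extend f x 0 = A.minEigenvalue • Function.extend f x 0 := by
  refine hA.mulVec_eq_minEigenvalue_smul_of_dotProduct_eq ?_
  rw [extend_zero_dotProduct_mulVec_extend_zero A hf, extend_zero_dotProduct_self hf, hx,
    dotProduct_smul, smul_eq_mul]

end Submatrix
end Matrix

section PathExtension

variable {W : Type*} (G : SimpleGraph W) (S : Set W) {ℓ : ℕ}

@[simp]
theorem pathExt_adj_inl_inl {u v : W} : (pathExt G S ℓ).Adj (.inl u) (.inl v) ↔ G.Adj u v := by
  simp only [pathExt, SimpleGraph.fromRel_adj, ne_eq, Sum.inl.injEq, G.adj_comm v u, or_self,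
    and_iff_right_iff_imp]
  exact G.ne_of_adj

@[simp]
theorem pathExt_adj_inl_inr {u : W} {i : Fin (ℓ + 1)} :
    (pathExt G S ℓ).Adj (.inl u) (.inr i) ↔ u ∈ S ∧ (i : ℕ) = 0 := by
  simp [pathExt]

@[simp]
theorem pathExt_adj_inr_inl {u : W} {i : Fin (ℓ + 1)} :
    (pathExt G S ℓ).Adj (.inr i) (.inl u) ↔ u ∈ S ∧ (i : ℕ) = 0 := by
  simp [pathExt]

@[simp]
theorem pathExt_adj_inr_inr {i j : Fin (ℓ + 1)} :
    (pathExt G S ℓ).Adj (.inr i) (.inr j) ↔ (j : ℕ) = i + 1 ∨ (i : ℕ) = j + 1 := by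
  simp only [pathExt, SimpleGraph.fromRel_adj, ne_eq, Sum.inr.injEq, and_iff_right_iff_imp]
  rintro h rfl
  omega

theorem pathExt_comap_inl : (pathExt G S ℓ).comap Sum.inl = G := by
  ext u v
  simp

theorem pathExt_comap_castSucc :
    (pathExt G S (ℓ + 1)).comap (Sum.map id Fin.castSucc) = pathExt G S ℓ := by
  ext (u | i) (v | j) <;> simp

theorem pathExt_adj_inr_last_iff (w : W ⊕ Fin (ℓ + 2)) :
    (pathExt G S (ℓ + 1)).Adj (.inr (Fin.last (ℓ + 1))) w ↔ w = .inr (Fin.last ℓ).castSucc := by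
  rcases w with v | j <;> simp [Fin.ext_iff]
  omega

theorem sumMap_castSucc_injective :
    (Sum.map id Fin.castSucc : W ⊕ Fin (ℓ + 1) → W ⊕ Fin (ℓ + 2)).Injective :=
  Sum.map_injective.2 ⟨Function.injective_id, Fin.castSucc_injective _⟩

theorem mem_range_sumMap_castSucc_iff {b : W ⊕ Fin (ℓ + 2)} :
    b ∈ Set.range (Sum.map id Fin.castSucc) ↔ b ≠ .inr (Fin.last (ℓ + 1)) := by
  rcases b with v | i <;> simp [Fin.exists_castSucc_eq]

theorem adjM_comap {α β : Type*} [Fintype α] [Fintype β] (H : SimpleGraph β) (f : α → β) :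
    adjM (H.comap f) = (adjM H).submatrix f f :=
  rfl

theorem minEig_eq_minEigenvalue {α : Type*} [Fintype α] (H : SimpleGraph α) :
    minEig H = (adjM H).minEigenvalue :=
  rfl

theorem adjM_isHermitian {α : Type*} [Fintype α] (H : SimpleGraph α) : (adjM H).IsHermitian := by
  ext i j
  simp [adjM, H.adj_comm]

variable [Fintype W]

theorem adjM_pathExt_mulVec_inr_last (y : W ⊕ Fin (ℓ + 2) → ℝ) :
    (adjM (pathExt G S (ℓ + 1)) *ᵥ y) (.inr (Fin.last (ℓ + 1))) =
      y (.inr (Fin.last ℓ).castSucc) := by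
  simp [mulVec, dotProduct, adjM, pathExt_adj_inr_last_iff]

theorem minEig_pathExt_succ_le : minEig (pathExt G S (ℓ + 1)) ≤ minEig (pathExt G S ℓ) := by
  have h := (adjM_isHermitian (pathExt G S (ℓ + 1))).minEigenvalue_le_minEigenvalue_submatrix
    sumMap_castSucc_injective
  rw [← adjM_comap, pathExt_comap_castSucc] at h
  exact h

theorem eq_zero_of_mulVec_eq_smul_of_eq_zero_last {μ : ℝ} {x : W ⊕ Fin (ℓ + 1) → ℝ}
    (hx : adjM (pathExt G S ℓ) *ᵥ x = μ • x) (hlast : x (.inr (Fin.last ℓ)) = 0) (i : Fin (ℓ + 1)) :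
    x (.inr i) = 0 := by
  induction ℓ with
  | zero => rwa [Subsingleton.elim (α := Fin 1) i (Fin.last 0)]
  | succ ℓ ih =>
    have hoff : ∀ b ∉ Set.range (Sum.map id Fin.castSucc), x b = 0 := fun b hb => by
      rw [mem_range_sumMap_castSucc_iff, not_not] at hb
      rwa [hb]
    have hrestrict := submatrix_mulVec_comp_eq_smul sumMap_castSucc_injective hoff hx
    rw [← adjM_comap, pathExt_comap_castSucc] at hrestrict
    -- `v_ℓ` is the only neighbour of `v_(ℓ+1)`, so the eigen-equation at `v_(ℓ+1)` gives `x v_ℓ = 0`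
    have hlast' : x (.inr (Fin.last ℓ).castSucc) = 0 := by
      rw [← adjM_pathExt_mulVec_inr_last G S x, hx, Pi.smul_apply, hlast, smul_zero]
    induction i using Fin.lastCases with
    | last => exact hlast
    | cast j => exact ih hrestrict hlast' j

theorem minEig_le_of_minEig_pathExt_succ_eq
    (h : minEig (pathExt G S (ℓ + 1)) = minEig (pathExt G S ℓ)) :
    minEig G ≤ minEig (pathExt G S ℓ) := by
  obtain ⟨x, hx, hAx⟩ := (adjM_isHermitian (pathExt G S ℓ)).minEigenvalue_spec.1
  have hAx' : (adjM (pathExt G S (ℓ + 1))).submatrix (Sum.map id Fin.castSucc)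
      (Sum.map id Fin.castSucc) *ᵥ x = minEig (pathExt G S (ℓ + 1)) • x := by
    rw [← adjM_comap, pathExt_comap_castSucc, h]
    exact hAx
  set y := Function.extend (Sum.map id Fin.castSucc) x 0
  have hy := (adjM_isHermitian _).mulVec_extend_zero_eq_minEigenvalue_smul sumMap_castSucc_injective hAx'
  have hy_path : ∀ i, y (.inr i) = 0 :=
    eq_zero_of_mulVec_eq_smul_of_eq_zero_last G S hy
      (Function.extend_apply' _ _ _ (mem_range_sumMap_castSucc_iff.not_left.2 rfl))
  have hG := submatrix_mulVec_comp_eq_smul Sum.inl_injective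
    (fun b hb => by rcases b with v | i; exacts [absurd ⟨v, rfl⟩ hb, hy_path i]) hy
  rw [← adjM_comap, pathExt_comap_inl, ← minEig_eq_minEigenvalue, h] at hG
  refine (adjM_isHermitian G).minEigenvalue_le_of_mulVec_eq_smul (fun h0 => hx ?_) hG
  rw [← Function.extend_comp sumMap_castSucc_injective x 0]
  funext b
  rcases b with v | i
  exacts [congrFun h0 v, hy_path _]

end PathExtension

theorem stmt14_general {W : Type*} [Fintype W] (G : SimpleGraph W) (S : Set W)
    (lam : ℝ)
    (hlim : Filter.Tendsto (fun ℓ => minEig (pathExt G S ℓ)) Filter.atTop (nhds (-lam)))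
    (hG : -lam < minEig G) :
    ∀ ℓ : ℕ, -lam < minEig (pathExt G S ℓ) := by
  have hanti : Antitone fun ℓ => minEig (pathExt G S ℓ) :=
    antitone_nat_of_succ_le fun ℓ => minEig_pathExt_succ_le G S
  have hlb : ∀ ℓ, -lam ≤ minEig (pathExt G S ℓ) := hanti.le_of_tendsto hlim
  intro ℓ
  refine (hlb ℓ).lt_of_ne fun heq => hG.not_ge ?_
  have hsucc : minEig (pathExt G S (ℓ + 1)) = minEig (pathExt G S ℓ) :=
    le_antisymm (minEig_pathExt_succ_le G S) (heq ▸ hlb (ℓ + 1))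
  exact heq ▸ minEig_le_of_minEig_pathExt_succ_eq G S hsucc

/-- If `λ = -lim_{ℓ→∞} λ₁(G_S, ℓ)` and `λ₁(G) > -λ`, then every path extension
`(G_S, ℓ)` has smallest eigenvalue strictly greater than `-λ`. -/
theorem stmt14 {W : Type*} [Fintype W] (G : SimpleGraph W) (S : Set W) (hS : S.Nonempty)
    (lam : ℝ)
    (hlim : Filter.Tendsto (fun ℓ => minEig (pathExt G S ℓ)) Filter.atTop (nhds (-lam)))
    (hG : -lam < minEig G) :
    ∀ ℓ : ℕ, -lam < minEig (pathExt G S ℓ) :=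
  stmt14_general G S lam hlim hG
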